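/- arXiv:0911.1501 — 2 statements merged into one kernel-verified Lean document; each statement's English description precedes it below -/
import Mathlib

section
/- Let f_0, f_1, f_2, f_3 ∈ ℝ² be a balanced system of forces at the points x_0, x_1, x_2, x_3 ∈ ℝ². Then for every ε > 0 and every finite set S ⊆ ℝ² there exist a point y_* in the ε-neighborhood of the convex hull of {x_0, x_1, x_2, x_3} with y_* ∉ S ∪ {x_0, x_1, x_2, x_3}, and two distinct indices i, j ∈ {0,1,2,3}, such that f_i ∧ x_i + f_j ∧ x_j − (f_i + f_j) ∧ y_* = 0; that is, the three forces f_i, f_j and −(f_i + f_j) supported at the points x_i, x_j, y_* form a balanced system. -/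
open scoped BigOperators
open Matrix

noncomputable section

/-- The Moore–Penrose pseudoinverse of a real square matrix, characterized by the
four Penrose conditions (it exists and is unique for every real matrix). -/
noncomputable def mpinv {n : Type*} [Fintype n] [DecidableEq n]
    (A : Matrix n n ℝ) : Matrix n n ℝ :=
  @dite _
    (∃ X : Matrix n n ℝ,
      A * X * A = A ∧ X * A * X = X ∧ (A * X)ᵀ = A * X ∧ (X * A)ᵀ = X * A)
    (Classical.propDecidable _) (fun h => h.choose) (fun _ => 0)

/-- Euclidean norm of a vector in `Fin d → ℝ`. -/
noncomputable def euclNorm {d : ℕ} (v : Fin d → ℝ) : ℝ := Real.sqrt (∑ a, v a ^ 2)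

/-- Unit vector pointing from `p` towards `q`. -/
noncomputable def unitDir {d : ℕ} (p q : Fin d → ℝ) : Fin d → ℝ :=
  fun a => (euclNorm (q - p))⁻¹ * (q a - p a)

/-- Stiffness matrix of a spring network with node positions `x` and spring
constants `k`: the `d × d` off-diagonal block coupling nodes `i ≠ j` is
`-k i j • n_{ij} n_{ij}ᵀ` and the `i`-th diagonal block is
`∑ j ≠ i, k i j • n_{ij} n_{ij}ᵀ`. -/
noncomputable def stiffness {d : ℕ} {ι : Type*} [Fintype ι] [DecidableEq ι]
    (x : ι → Fin d → ℝ) (k : ι → ι → ℝ) :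
    Matrix (ι × Fin d) (ι × Fin d) ℝ :=
  Matrix.of fun p q =>
    if p.1 = q.1 then
      ∑ j ∈ Finset.univ.filter (fun j => j ≠ p.1),
        k p.1 j * (unitDir (x p.1) (x j) p.2 * unitDir (x p.1) (x j) q.2)
    else
      -(k p.1 q.1 * (unitDir (x p.1) (x q.1) p.2 * unitDir (x p.1) (x q.1) q.2))

/-- `(x, k)` is a spring network: nodes are at distinct positions and the spring
constants are symmetric and nonnegative. -/
def IsSpringNetwork {d : ℕ} {ι : Type*} (x : ι → Fin d → ℝ) (k : ι → ι → ℝ) : Prop :=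
  Function.Injective x ∧ (∀ i j, k i j = k j i) ∧ (∀ i j, 0 ≤ k i j)

/-- The block of a matrix indexed by `(nodes × Fin d)` selected by the node
maps `f` and `g`. -/
def blk {d : ℕ} {ι κ₁ κ₂ : Type*} (K : Matrix (ι × Fin d) (ι × Fin d) ℝ)
    (f : κ₁ → ι) (g : κ₂ → ι) : Matrix (κ₁ × Fin d) (κ₂ × Fin d) ℝ :=
  K.submatrix (Prod.map f id) (Prod.map g id)

/-- Generalized Schur complement `K_BB - K_BI K_II† K_IB` eliminating the
interior nodes `I`. -/
noncomputable def schurResp {d : ℕ} {B I : Type*} [Fintype B] [Fintype I]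
    [DecidableEq B] [DecidableEq I]
    (K : Matrix ((B ⊕ I) × Fin d) ((B ⊕ I) × Fin d) ℝ) :
    Matrix (B × Fin d) (B × Fin d) ℝ :=
  blk K Sum.inl Sum.inl -
    blk K Sum.inl Sum.inr * mpinv (blk K Sum.inr Sum.inr) * blk K Sum.inr Sum.inl

/-- Static response matrix at the terminals `B` of the spring network `(x, k)`
with interior nodes `I`. -/
noncomputable def staticResponse {d : ℕ} {B I : Type*} [Fintype B] [Fintype I]
    [DecidableEq B] [DecidableEq I]
    (x : (B ⊕ I) → Fin d → ℝ) (k : (B ⊕ I) → (B ⊕ I) → ℝ) :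
    Matrix (B × Fin d) (B × Fin d) ℝ :=
  schurResp (stiffness x k)

/-- Balanced system of forces `f` supported at the points `x`: the total force
vanishes and the total torque vanishes (the torque being recorded as the
antisymmetric matrix `x_i ∧ f_i`, which for `d = 2` is equivalent to the scalar
wedge `u ∧ v = u 0 * v 1 - u 1 * v 0` and for `d = 3` to the cross product). -/
def IsBalanced {d : ℕ} {ι : Type*} [Fintype ι]
    (x f : ι → Fin d → ℝ) : Prop :=
  (∀ a, ∑ i, f i a = 0) ∧ ∀ a b, ∑ i, (x i a * f i b - x i b * f i a) = 0

/-- Planar wedge product. -/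
def wedge2 (u v : Fin 2 → ℝ) : ℝ := u 0 * v 1 - u 1 * v 0

/-- Cross product in `ℝ³`. -/
def cross3 (u v : Fin 3 → ℝ) : Fin 3 → ℝ :=
  ![u 1 * v 2 - u 2 * v 1, u 2 * v 0 - u 0 * v 2, u 0 * v 1 - u 1 * v 0]

/-- The `ε`-neighborhood `{y | dist (y, C) ≤ ε}` of a set `C` (for a closed set
`C`, membership is equivalent to being within Euclidean distance `ε` of some
point of `C`). -/
def epsNbhd {d : ℕ} (C : Set (Fin d → ℝ)) (ε : ℝ) : Set (Fin d → ℝ) :=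
  {y | ∃ z ∈ C, euclNorm (y - z) ≤ ε}

/-- Combine terminal and interior displacements into a displacement of all
nodes. -/
def glue {d : ℕ} {B I : Type*} (uB : B × Fin d → ℝ) (uI : I × Fin d → ℝ) :
    (B ⊕ I) × Fin d → ℝ :=
  fun p => Sum.elim (fun b => uB (b, p.2)) (fun i => uI (i, p.2)) p.1

/-- The reduced stiffness matrix `K̃` at the nodes `B ⊕ J` of a spring–mass
network with massless interior nodes `L`, obtained by eliminating `L`. -/
noncomputable def dynKtilde {d : ℕ} {B J L : Type*} [Fintype B] [Fintype J] [Fintype L]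
    [DecidableEq B] [DecidableEq J] [DecidableEq L]
    (x : ((B ⊕ J) ⊕ L) → Fin d → ℝ) (k : ((B ⊕ J) ⊕ L) → ((B ⊕ J) ⊕ L) → ℝ) :
    Matrix ((B ⊕ J) × Fin d) ((B ⊕ J) × Fin d) ℝ :=
  schurResp (stiffness x k)

/-- The diagonal mass matrix `M_JJ` of the interior nodes with mass. -/
noncomputable def massJJ {d : ℕ} {B J L : Type*} [Fintype J] [DecidableEq J]
    (m : (B ⊕ J) ⊕ L → ℝ) : Matrix (J × Fin d) (J × Fin d) ℝ :=
  Matrix.diagonal fun p => m (Sum.inl (Sum.inr p.1))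

/-- The diagonal mass matrix `M_BB` of the terminal nodes. -/
noncomputable def massBB {d : ℕ} {B J L : Type*} [Fintype B] [DecidableEq B]
    (m : (B ⊕ J) ⊕ L → ℝ) : Matrix (B × Fin d) (B × Fin d) ℝ :=
  Matrix.diagonal fun p => m (Sum.inl (Sum.inl p.1))

/-- Dynamic response function
`W(ω) = K̃_BB - ω² M_BB - K̃_BJ (K̃_JJ - ω² M_JJ)⁻¹ K̃_JB` of a spring–mass
network with terminals `B`, interior nodes `J` carrying the masses `m` and
massless interior nodes `L`. -/
noncomputable def dynResponse {d : ℕ} {B J L : Type*} [Fintype B] [Fintype J] [Fintype L]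
    [DecidableEq B] [DecidableEq J] [DecidableEq L]
    (x : ((B ⊕ J) ⊕ L) → Fin d → ℝ) (k : ((B ⊕ J) ⊕ L) → ((B ⊕ J) ⊕ L) → ℝ)
    (m : (B ⊕ J) ⊕ L → ℝ) (ω : ℝ) : Matrix (B × Fin d) (B × Fin d) ℝ :=
  blk (dynKtilde x k) Sum.inl Sum.inl - ω ^ 2 • massBB m -
    blk (dynKtilde x k) Sum.inl Sum.inr *
      (blk (dynKtilde x k) Sum.inr Sum.inr - ω ^ 2 • massJJ m)⁻¹ *
      blk (dynKtilde x k) Sum.inr Sum.inl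

/-! With `τᵢ(y) = fᵢ ∧ y - fᵢ ∧ xᵢ`, which vanishes at `xᵢ`, the conclusion asks for
`τᵢ(y) + τⱼ(y) = 0`, and balance says `∑ᵢ τᵢ(y) = 0` for every `y`. Evaluated at the four
supports, this gives four signed relations between the values of `τ₀ + τₚ` (`p = 1, 2, 3`)
there, whose sign patterns rule out that every `τ₀ + τₚ` has a strict constant sign on the
supports. So some `τ₀ + τₚ`, an affine function, vanishes somewhere on the convex hull; it then
vanishes on a whole line through that point, which leaves room to avoid the finite set. -/

lemma euclNorm_eq_norm {d : ℕ} (v : Fin d → ℝ) :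
    euclNorm v = ‖(WithLp.toLp 2 v : EuclideanSpace ℝ (Fin d))‖ := by
  simp [euclNorm, EuclideanSpace.norm_eq, Real.norm_eq_abs, sq_abs]

lemma exists_add_smul_mem_epsNbhd_notMem {d : ℕ} {C T : Set (Fin d → ℝ)} {z v : Fin d → ℝ}
    {ε : ℝ} (hz : z ∈ C) (hv : v ≠ 0) (hε : 0 < ε) (hT : T.Finite) :
    ∃ t : ℝ, z + t • v ∈ epsNbhd C ε ∧ z + t • v ∉ T := by
  have hv' : 0 < euclNorm v := by
    rw [euclNorm_eq_norm]
    exact norm_pos_iff.mpr fun h => hv (by simpa using h)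
  have hinj : Function.Injective fun t : ℝ => z + t • v := fun s t h =>
    smul_left_injective ℝ hv (add_left_cancel h)
  obtain ⟨t, ⟨ht0, htε⟩, htT⟩ := (Set.Icc_infinite (div_pos hε hv')).exists_notMem_finite
    (hT.preimage hinj.injOn)
  refine ⟨t, ⟨z, hz, ?_⟩, htT⟩
  calc euclNorm (z + t • v - z) = t * euclNorm v := by
        simp [euclNorm_eq_norm, norm_smul, abs_of_nonneg ht0]
    _ ≤ ε := (le_div_iff₀ hv').mp htε

lemma wedge2_add_left (u v w : Fin 2 → ℝ) : wedge2 (u + v) w = wedge2 u w + wedge2 v w := by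
  simp only [wedge2, Pi.add_apply]
  ring

lemma wedge2_add_smul (g z v : Fin 2 → ℝ) (t : ℝ) :
    wedge2 g (z + t • v) = wedge2 g z + t * wedge2 g v := by
  simp only [wedge2, Pi.add_apply, Pi.smul_apply, smul_eq_mul]
  ring

lemma continuous_wedge2 (g : Fin 2 → ℝ) : Continuous (wedge2 g) := by
  unfold wedge2
  fun_prop

lemma exists_ne_zero_wedge2_eq_zero (g : Fin 2 → ℝ) : ∃ v ≠ 0, wedge2 g v = 0 := by
  by_cases hg : g = 0
  · exact ⟨![1, 0], fun h => by simpa using congrFun h 0, by simp [hg, wedge2]⟩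
  · exact ⟨g, hg, by simp only [wedge2]; ring⟩

lemma exists_mem_epsNbhd_notMem_wedge2_eq {C T : Set (Fin 2 → ℝ)} (hC : Convex ℝ C)
    {a b g : Fin 2 → ℝ} (ha : a ∈ C) (hb : b ∈ C) {c ε : ℝ}
    (hc : c ∈ Set.Icc (wedge2 g a) (wedge2 g b)) (hε : 0 < ε) (hT : T.Finite) :
    ∃ y ∈ epsNbhd C ε, y ∉ T ∧ wedge2 g y = c := by
  obtain ⟨z, hz, hzc⟩ :=
    hC.isPreconnected.intermediate_value ha hb (continuous_wedge2 g).continuousOn hc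
  obtain ⟨v, hv, hgv⟩ := exists_ne_zero_wedge2_eq_zero g
  obtain ⟨t, htC, htT⟩ := exists_add_smul_mem_epsNbhd_notMem hz hv hε hT
  exact ⟨z + t • v, htC, htT, by rw [wedge2_add_smul, hgv, mul_zero, add_zero, hzc]⟩

lemma sum_wedge2_sub_eq_zero {ι : Type*} [Fintype ι] {x f : ι → Fin 2 → ℝ}
    (hbal : (∑ i, f i) = 0 ∧ ∑ i, wedge2 (x i) (f i) = 0) (y : Fin 2 → ℝ) :
    ∑ i, (wedge2 (f i) y - wedge2 (f i) (x i)) = 0 := by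
  have h0 : ∑ i, f i 0 = 0 := by simpa using congrFun hbal.1 0
  have h1 : ∑ i, f i 1 = 0 := by simpa using congrFun hbal.1 1
  have hτ : ∑ i, (wedge2 (f i) y - wedge2 (f i) (x i)) =
      (∑ i, f i 0) * y 1 - (∑ i, f i 1) * y 0 + ∑ i, wedge2 (x i) (f i) := by
    simp only [wedge2, Finset.sum_mul, ← Finset.sum_sub_distrib, ← Finset.sum_add_distrib]
    exact Finset.sum_congr rfl fun i _ => by ring
  rw [hτ, h0, h1, hbal.2]
  ring

lemma forall_pos_or_forall_neg {ι : Type*} {a : ι → ℝ} (h : ∀ m n, a m ≤ 0 → a n < 0) :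
    (∀ m, 0 < a m) ∨ ∀ m, a m < 0 := by
  by_cases hm : ∃ m, a m ≤ 0
  · obtain ⟨m, hm⟩ := hm
    exact Or.inr fun n => h m n hm
  · exact Or.inl fun m => lt_of_not_ge fun hm' => hm ⟨m, hm'⟩

lemma exists_pair_sign_change (τ : Fin 4 → Fin 4 → ℝ) (hdiag : ∀ m, τ m m = 0)
    (hsum : ∀ m, ∑ i, τ i m = 0) :
    ∃ p ≠ 0, ∃ m n, τ 0 m + τ p m ≤ 0 ∧ 0 ≤ τ 0 n + τ p n := by
  by_contra! h
  have hs := fun m => (Fin.sum_univ_four fun i => τ i m).symm.trans (hsum m)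
  -- Written in terms of `τ 0 + τ p` (`p = 1, 2, 3`), the relations `hs m` carry the four sign
  -- vectors with product `+1`, so every strict sign pattern is contradicted at some support.
  rcases forall_pos_or_forall_neg (h 1 (by decide)) with h1 | h1 <;>
  rcases forall_pos_or_forall_neg (h 2 (by decide)) with h2 | h2 <;>
  rcases forall_pos_or_forall_neg (h 3 (by decide)) with h3 | h3 <;>
  linarith [h1 0, h1 1, h1 2, h1 3, h2 0, h2 1, h2 2, h2 3, h3 0, h3 1, h3 2, h3 3,
    hs 0, hs 1, hs 2, hs 3, hdiag 0, hdiag 1, hdiag 2, hdiag 3]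

/-- for any balanced system of four forces in the plane there is a
point `y⋆` near the convex hull of the supports, avoiding a finite set and the
supports, at which two of the forces can be balanced by `-(fᵢ + fⱼ)`. -/
theorem four_forces_partial_balance (x f : Fin 4 → Fin 2 → ℝ)
    (hbal : (∑ i, f i) = 0 ∧ ∑ i, wedge2 (x i) (f i) = 0)
    (ε : ℝ) (hε : 0 < ε) (S : Set (Fin 2 → ℝ)) (hS : S.Finite) :
    ∃ y : Fin 2 → ℝ,
      y ∈ epsNbhd (convexHull ℝ (Set.range x)) ε ∧
      y ∉ S ∧ y ∉ Set.range x ∧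
      ∃ i j : Fin 4, i ≠ j ∧
        wedge2 (f i) (x i) + wedge2 (f j) (x j) - wedge2 (f i + f j) y = 0 := by
  obtain ⟨p, hp, m, n, hm, hn⟩ := exists_pair_sign_change
    (fun i m => wedge2 (f i) (x m) - wedge2 (f i) (x i)) (fun m => sub_self _)
    (fun m => sum_wedge2_sub_eq_zero hbal (x m))
  have hc : wedge2 (f 0) (x 0) + wedge2 (f p) (x p) ∈
      Set.Icc (wedge2 (f 0 + f p) (x m)) (wedge2 (f 0 + f p) (x n)) := by
    rw [wedge2_add_left, wedge2_add_left]
    constructor <;> linarith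
  obtain ⟨y, hyC, hyT, hy⟩ := exists_mem_epsNbhd_notMem_wedge2_eq (convex_convexHull ℝ _)
    (subset_convexHull ℝ _ (Set.mem_range_self m))
    (subset_convexHull ℝ _ (Set.mem_range_self n)) hc hε (hS.union (Set.finite_range x))
  exact ⟨y, hyC, fun h => hyT (Or.inl h), fun h => hyT (Or.inr h), 0, p, hp.symm,
    sub_eq_zero.mpr hy.symm⟩
end
end

section
/- Let B be a set of terminal positions in ℝ^d (d = 2 or 3), and let two spring networks N₁ and N₂ have their terminal nodes at exactly these positions and have disjoint sets of interior nodes (all node positions of both networks pairwise distinct). Form the combined network whose node set is B together with the interior nodes of both networks, whose spring constant between two terminal nodes is the sum of the corresponding constants in N₁ and N₂, whose spring constants involving an interior node of N₁ (respectively N₂) are those of N₁ (respectively N₂), and whose spring constant between an interior node of N₁ and an interior node of N₂ is zero. Then the static response matrix of the combined network at the terminals B equals W₁ + W₂, where W₁, W₂ are the static response matrices of N₁, N₂. -/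
/-!
The combined network is the superposition of the two networks placed on the common node set
(their spring constants extended by zero), and the stiffness matrix is additive in the spring
constants. As no spring joins `I₁` to `I₂`, the interior block of the combined stiffness matrix
is block diagonal, `diag(K₁,II, K₂,II)`; since the Penrose conditions hold blockwise and
determine the pseudoinverse uniquely, its Moore–Penrose inverse is `diag(K₁,II†, K₂,II†)`.
Expanding `K_BB - K_BI K_II† K_IB` block by block then splits it into the two responses.
-/

open scoped BigOperators
open Matrix

noncomputable section

section MoorePenrose

variable {R : Type*}

def IsMoorePenroseInverse [Mul R] [Star R] (a x : R) : Prop :=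
  a * x * a = a ∧ x * a * x = x ∧ star (a * x) = a * x ∧ star (x * a) = x * a

theorem IsMoorePenroseInverse.unique [Semigroup R] [StarMul R] {a x y : R}
    (hx : IsMoorePenroseInverse a x) (hy : IsMoorePenroseInverse a y) : x = y := by
  obtain ⟨hx₁, hx₂, hx₃, hx₄⟩ := hx
  obtain ⟨hy₁, hy₂, hy₃, hy₄⟩ := hy
  have hax : a * x = a * y :=
    calc a * x = star (a * y * a * x) := by rw [hy₁, hx₃]
      _ = a * x * (a * y) := by rw [mul_assoc, star_mul, hx₃, hy₃]
      _ = a * y := by rw [← mul_assoc, hx₁]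
  have hxa : x * a = y * a :=
    calc x * a = star (x * (a * y * a)) := by rw [hy₁, hx₄]
      _ = y * a * (x * a) := by
        rw [show x * (a * y * a) = x * a * (y * a) by simp only [mul_assoc], star_mul, hx₄, hy₄]
      _ = y * a := by rw [mul_assoc y, ← mul_assoc a, hx₁]
  calc x = x * a * x := hx₂.symm
    _ = y * a * y := by rw [mul_assoc, hax, ← mul_assoc, hxa]
    _ = y := hy₂

theorem IsMoorePenroseInverse.map [Mul R] [Star R] {S F : Type*} [Mul S] [Star S]
    [FunLike F R S] [MulHomClass F R S] [StarHomClass F R S] (f : F) {a x : R}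
    (h : IsMoorePenroseInverse a x) : IsMoorePenroseInverse (f a) (f x) := by
  obtain ⟨h₁, h₂, h₃, h₄⟩ := h
  refine ⟨?_, ?_, ?_, ?_⟩ <;> simp only [← map_mul, ← map_star, h₁, h₂, h₃, h₄]

end MoorePenrose

theorem isMoorePenroseInverse_diagonal {n K : Type*} [Fintype n] [DecidableEq n]
    [DivisionRing K] [StarRing K] (f : n → K) :
    IsMoorePenroseInverse (diagonal f) (diagonal f⁻¹) := by
  -- each `f i * (f i)⁻¹` is `0` or `1`, hence self-adjoint
  refine ⟨?_, ?_, ?_, ?_⟩ <;>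
    simp only [diagonal_mul_diagonal, star_eq_conjTranspose, diagonal_conjTranspose] <;>
    congr 1 <;> funext i <;> rcases eq_or_ne (f i) 0 with h | h <;> simp [h]

theorem IsMoorePenroseInverse.fromBlocks {l m α : Type*} [Fintype l] [Fintype m]
    [Semiring α] [StarRing α]
    {A X : Matrix l l α} {D Y : Matrix m m α}
    (h₁ : IsMoorePenroseInverse A X) (h₂ : IsMoorePenroseInverse D Y) :
    IsMoorePenroseInverse (fromBlocks A 0 0 D) (fromBlocks X 0 0 Y) := by
  obtain ⟨hA₁, hA₂, hA₃, hA₄⟩ := h₁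
  obtain ⟨hD₁, hD₂, hD₃, hD₄⟩ := h₂
  refine ⟨?_, ?_, ?_, ?_⟩ <;>
    simp only [fromBlocks_multiply, star_eq_conjTranspose, fromBlocks_conjTranspose,
      Matrix.mul_zero, Matrix.zero_mul, add_zero, zero_add, conjTranspose_zero] at * <;>
    simp only [hA₁, hA₂, hA₃, hA₄, hD₁, hD₂, hD₃, hD₄]

theorem IsMoorePenroseInverse.submatrix_equiv {m n α : Type*} [Fintype m] [Fintype n]
    [Semiring α] [StarRing α] {A X : Matrix n n α}
    (h : IsMoorePenroseInverse A X) (e : m ≃ n) :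
    IsMoorePenroseInverse (A.submatrix e e) (X.submatrix e e) := by
  obtain ⟨h₁, h₂, h₃, h₄⟩ := h
  refine ⟨?_, ?_, ?_, ?_⟩ <;>
    simp only [submatrix_mul_equiv, star_eq_conjTranspose, conjTranspose_submatrix] at * <;>
    simp only [h₁, h₂, h₃, h₄]

theorem Matrix.IsHermitian.exists_isMoorePenroseInverse {n 𝕜 : Type*} [Fintype n]
    [DecidableEq n] [RCLike 𝕜] {A : Matrix n n 𝕜} (hA : A.IsHermitian) :
    ∃ X, IsMoorePenroseInverse A X := by
  rw [hA.spectral_theorem]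
  exact ⟨_, (isMoorePenroseInverse_diagonal _).map _⟩

def extendByZero {κ ι M : Type*} [Zero M] (f : κ → ι) (k : κ → κ → M) : ι → ι → M :=
  Function.extend f (fun a => Function.extend f (k a) 0) 0

section ExtendByZero

variable {κ ι M : Type*} [Zero M] {f : κ → ι} (k : κ → κ → M)

theorem extendByZero_apply_apply (hf : f.Injective) (a b : κ) :
    extendByZero f k (f a) (f b) = k a b := by
  simp only [extendByZero, hf.extend_apply]

theorem extendByZero_apply_of_notMem_range_left {i : ι} (hi : i ∉ Set.range f) (j : ι) :
    extendByZero f k i j = 0 := by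
  rw [extendByZero, Function.extend_apply' _ _ _ (by simpa using hi), Pi.zero_apply,
    Pi.zero_apply]

theorem extendByZero_apply_of_notMem_range_right {j : ι} (hj : j ∉ Set.range f) (i : ι) :
    extendByZero f k i j = 0 := by
  classical
  rw [extendByZero, Function.extend_def]
  split_ifs
  · rw [Function.extend_apply' _ _ _ (by simpa using hj), Pi.zero_apply]
  · rfl

end ExtendByZero

section Stiffness

variable {d : ℕ} {ι κ : Type*} [Fintype ι] [DecidableEq ι]

theorem stiffness_apply_of_ne (x : ι → Fin d → ℝ) (k : ι → ι → ℝ) {i j : ι} (h : i ≠ j)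
    (α β : Fin d) :
    stiffness x k (i, α) (j, β) = -(k i j * (unitDir (x i) (x j) α * unitDir (x i) (x j) β)) := by
  simp [stiffness, h]

theorem stiffness_apply_self (x : ι → Fin d → ℝ) (k : ι → ι → ℝ) (i : ι) (α β : Fin d) :
    stiffness x k (i, α) (i, β) =
      ∑ j : ι, if j ≠ i then k i j * (unitDir (x i) (x j) α * unitDir (x i) (x j) β) else 0 := by
  simp [stiffness, Finset.sum_filter]

theorem unitDir_mul_unitDir_comm (p q : Fin d → ℝ) (α β : Fin d) :
    unitDir q p α * unitDir q p β = unitDir p q α * unitDir p q β := by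
  have : euclNorm (p - q) = euclNorm (q - p) := by
    unfold euclNorm
    congr 1
    exact Finset.sum_congr rfl fun a _ => by simp only [Pi.sub_apply]; ring
  simp only [unitDir, this]
  ring

theorem stiffness_isSymm (x : ι → Fin d → ℝ) {k : ι → ι → ℝ} (hk : ∀ i j, k i j = k j i) :
    (stiffness x k).IsSymm := by
  ext ⟨i, α⟩ ⟨j, β⟩
  rw [transpose_apply]
  rcases eq_or_ne i j with rfl | h
  · simp only [stiffness_apply_self]
    exact Finset.sum_congr rfl fun c _ => by split_ifs <;> ring
  · rw [stiffness_apply_of_ne x k h.symm, stiffness_apply_of_ne x k h, hk j i,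
      unitDir_mul_unitDir_comm (x i) (x j) β α]
    ring

theorem stiffness_add (x : ι → Fin d → ℝ) (k k' : ι → ι → ℝ) :
    stiffness x (k + k') = stiffness x k + stiffness x k' := by
  ext ⟨i, α⟩ ⟨j, β⟩
  rcases eq_or_ne i j with rfl | h
  · simp only [Matrix.add_apply, stiffness_apply_self, ← Finset.sum_add_distrib]
    exact Finset.sum_congr rfl fun c _ => by
      split_ifs <;> simp only [Pi.add_apply, add_mul, add_zero]
  · simp only [Matrix.add_apply, stiffness_apply_of_ne x _ h, Pi.add_apply]
    ring

theorem stiffness_extendByZero_apply_of_notMem_range (x : ι → Fin d → ℝ) {f : κ → ι}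
    (k : κ → κ → ℝ) {i j : ι} (hij : i ∉ Set.range f ∨ j ∉ Set.range f) (α β : Fin d) :
    stiffness x (extendByZero f k) (i, α) (j, β) = 0 := by
  rcases eq_or_ne i j with rfl | h
  · have hi : i ∉ Set.range f := hij.elim id id
    simp [stiffness_apply_self, extendByZero_apply_of_notMem_range_left k hi]
  · rcases hij with hi | hj
    · simp [stiffness_apply_of_ne x _ h, extendByZero_apply_of_notMem_range_left k hi]
    · simp [stiffness_apply_of_ne x _ h, extendByZero_apply_of_notMem_range_right k hj]

theorem blk_stiffness_extendByZero [Fintype κ] [DecidableEq κ] (x : ι → Fin d → ℝ)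
    {f : κ → ι} (hf : f.Injective) (k : κ → κ → ℝ) :
    blk (stiffness x (extendByZero f k)) f f = stiffness (x ∘ f) k := by
  ext ⟨a, α⟩ ⟨b, β⟩
  simp only [blk, submatrix_apply, Prod.map_apply, id]
  rcases eq_or_ne a b with rfl | h
  · rw [stiffness_apply_self, stiffness_apply_self]
    symm
    refine Fintype.sum_of_injective f hf _ _ (fun j hj => ?_) (fun b => ?_)
    · simp [extendByZero_apply_of_notMem_range_right k hj]
    · simp [hf.ne_iff, extendByZero_apply_apply k hf]
  · rw [stiffness_apply_of_ne _ _ h, stiffness_apply_of_ne _ _ (hf.ne h),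
      extendByZero_apply_apply k hf]
    rfl

end Stiffness

section PseudoInverse

variable {n : Type*} [Fintype n] [DecidableEq n]

theorem IsMoorePenroseInverse.mpinv_eq {A X : Matrix n n ℝ} (h : IsMoorePenroseInverse A X) :
    mpinv A = X := by
  have htr : ∀ {Y : Matrix n n ℝ}, IsMoorePenroseInverse A Y ↔
      A * Y * A = A ∧ Y * A * Y = Y ∧ (A * Y)ᵀ = A * Y ∧ (Y * A)ᵀ = Y * A := by
    simp only [IsMoorePenroseInverse, star_eq_conjTranspose, conjTranspose_eq_transpose_of_trivial,
      implies_true]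
  have hex : ∃ Y : Matrix n n ℝ,
      A * Y * A = A ∧ Y * A * Y = Y ∧ (A * Y)ᵀ = A * Y ∧ (Y * A)ᵀ = Y * A := ⟨X, htr.1 h⟩
  rw [mpinv, dif_pos hex]
  exact (htr.2 hex.choose_spec).unique h

theorem Matrix.IsSymm.isMoorePenroseInverse_mpinv {A : Matrix n n ℝ} (hA : A.IsSymm) :
    IsMoorePenroseInverse A (mpinv A) := by
  obtain ⟨X, hX⟩ := (isHermitian_iff_isSymm.2 hA).exists_isMoorePenroseInverse
  rwa [hX.mpinv_eq]

end PseudoInverse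

theorem schurResp_add_of_disjoint_interiors {d : ℕ} {B I₁ I₂ : Type*} [Fintype B] [Fintype I₁]
    [Fintype I₂] [DecidableEq B] [DecidableEq I₁] [DecidableEq I₂]
    (K₁ K₂ : Matrix ((B ⊕ (I₁ ⊕ I₂)) × Fin d) ((B ⊕ (I₁ ⊕ I₂)) × Fin d) ℝ)
    (h₁ : ∀ i α p, K₁ (.inr (.inr i), α) p = 0 ∧ K₁ p (.inr (.inr i), α) = 0)
    (h₂ : ∀ i α p, K₂ (.inr (.inl i), α) p = 0 ∧ K₂ p (.inr (.inl i), α) = 0)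
    (hs₁ : (blk K₁ (Sum.map id .inl) (Sum.map id .inl)).IsSymm)
    (hs₂ : (blk K₂ (Sum.map id .inr) (Sum.map id .inr)).IsSymm) :
    schurResp (K₁ + K₂) = schurResp (blk K₁ (Sum.map id .inl) (Sum.map id .inl)) +
      schurResp (blk K₂ (Sum.map id .inr) (Sum.map id .inr)) := by
  set L₁ := blk K₁ (Sum.map id .inl) (Sum.map id .inl)
  set L₂ := blk K₂ (Sum.map id .inr) (Sum.map id .inr)
  let e : (I₁ ⊕ I₂) × Fin d ≃ I₁ × Fin d ⊕ I₂ × Fin d := Equiv.sumProdDistrib I₁ I₂ (Fin d)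
  have hBB : blk (K₁ + K₂) .inl .inl = blk L₁ .inl .inl + blk L₂ .inl .inl := rfl
  have hBI : blk (K₁ + K₂) .inl .inr =
      (fromCols (blk L₁ .inl .inr) (blk L₂ .inl .inr)).submatrix id e := by
    ext ⟨b, α⟩ ⟨i | i, β⟩ <;> simp [blk, L₁, L₂, e, h₁, h₂]
  have hIB : blk (K₁ + K₂) .inr .inl =
      (fromRows (blk L₁ .inr .inl) (blk L₂ .inr .inl)).submatrix e id := by
    ext ⟨i | i, α⟩ ⟨b, β⟩ <;> simp [blk, L₁, L₂, e, h₁, h₂]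
  have hII : blk (K₁ + K₂) .inr .inr =
      (fromBlocks (blk L₁ .inr .inr) 0 0 (blk L₂ .inr .inr)).submatrix e e := by
    ext ⟨i | i, α⟩ ⟨j | j, β⟩ <;> simp [blk, L₁, L₂, e, h₁, h₂]
  have hmp : mpinv (blk (K₁ + K₂) .inr .inr) =
      (fromBlocks (mpinv (blk L₁ .inr .inr)) 0 0 (mpinv (blk L₂ .inr .inr))).submatrix e e := by
    rw [hII]
    exact (((hs₁.submatrix _).isMoorePenroseInverse_mpinv.fromBlocks
      (hs₂.submatrix _).isMoorePenroseInverse_mpinv).submatrix_equiv e).mpinv_eq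
  rw [schurResp, hBB, hBI, hIB, hmp, submatrix_mul_equiv, submatrix_mul_equiv, submatrix_id_id,
    fromCols_mul_fromBlocks, fromCols_mul_fromRows]
  simp only [schurResp, Matrix.mul_zero, add_zero, zero_add]
  abel

theorem staticResponse_extendByZero_add {d : ℕ} {B I₁ I₂ : Type*} [Fintype B] [Fintype I₁]
    [Fintype I₂] [DecidableEq B] [DecidableEq I₁] [DecidableEq I₂]
    (x : B ⊕ (I₁ ⊕ I₂) → Fin d → ℝ) {k₁ : B ⊕ I₁ → B ⊕ I₁ → ℝ} {k₂ : B ⊕ I₂ → B ⊕ I₂ → ℝ}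
    (hk₁ : ∀ i j, k₁ i j = k₁ j i) (hk₂ : ∀ i j, k₂ i j = k₂ j i) :
    staticResponse x (extendByZero (Sum.map id .inl) k₁ + extendByZero (Sum.map id .inr) k₂) =
      staticResponse (x ∘ Sum.map id .inl) k₁ + staticResponse (x ∘ Sum.map id .inr) k₂ := by
  have hK₁ := blk_stiffness_extendByZero x
    (Sum.map_injective.2 ⟨Function.injective_id, Sum.inl_injective⟩) k₁
  have hK₂ := blk_stiffness_extendByZero x
    (Sum.map_injective.2 ⟨Function.injective_id, Sum.inr_injective⟩) k₂
  unfold staticResponse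
  rw [stiffness_add, schurResp_add_of_disjoint_interiors, hK₁, hK₂]
  · exact fun i α p =>
      ⟨stiffness_extendByZero_apply_of_notMem_range x k₁ (.inl (by simp)) α p.2,
        stiffness_extendByZero_apply_of_notMem_range x k₁ (.inr (by simp)) p.2 α⟩
  · exact fun i α p =>
      ⟨stiffness_extendByZero_apply_of_notMem_range x k₂ (.inl (by simp)) α p.2,
        stiffness_extendByZero_apply_of_notMem_range x k₂ (.inr (by simp)) p.2 α⟩
  · rw [hK₁]
    exact stiffness_isSymm _ hk₁
  · rw [hK₂]
    exact stiffness_isSymm _ hk₂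

theorem superposition_principle_general {d : ℕ}
    {B I₁ I₂ : Type*} [Fintype B] [Fintype I₁] [Fintype I₂]
    [DecidableEq B] [DecidableEq I₁] [DecidableEq I₂]
    (xB : B → Fin d → ℝ) (xI₁ : I₁ → Fin d → ℝ) (xI₂ : I₂ → Fin d → ℝ)
    (k₁ : (B ⊕ I₁) → (B ⊕ I₁) → ℝ) (k₂ : (B ⊕ I₂) → (B ⊕ I₂) → ℝ)
    (hnet₁ : IsSpringNetwork (Sum.elim xB xI₁) k₁)
    (hnet₂ : IsSpringNetwork (Sum.elim xB xI₂) k₂)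
    (k : (B ⊕ (I₁ ⊕ I₂)) → (B ⊕ (I₁ ⊕ I₂)) → ℝ)
    (hkBB : ∀ b b', k (Sum.inl b) (Sum.inl b') =
      k₁ (Sum.inl b) (Sum.inl b') + k₂ (Sum.inl b) (Sum.inl b'))
    (hkBI₁ : ∀ b i, k (Sum.inl b) (Sum.inr (Sum.inl i)) = k₁ (Sum.inl b) (Sum.inr i))
    (hkI₁B : ∀ i b, k (Sum.inr (Sum.inl i)) (Sum.inl b) = k₁ (Sum.inr i) (Sum.inl b))
    (hkBI₂ : ∀ b i, k (Sum.inl b) (Sum.inr (Sum.inr i)) = k₂ (Sum.inl b) (Sum.inr i))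
    (hkI₂B : ∀ i b, k (Sum.inr (Sum.inr i)) (Sum.inl b) = k₂ (Sum.inr i) (Sum.inl b))
    (hkI₁I₁ : ∀ i i', k (Sum.inr (Sum.inl i)) (Sum.inr (Sum.inl i')) =
      k₁ (Sum.inr i) (Sum.inr i'))
    (hkI₂I₂ : ∀ i i', k (Sum.inr (Sum.inr i)) (Sum.inr (Sum.inr i')) =
      k₂ (Sum.inr i) (Sum.inr i'))
    (hkI₁I₂ : ∀ i i', k (Sum.inr (Sum.inl i)) (Sum.inr (Sum.inr i')) = 0)
    (hkI₂I₁ : ∀ i i', k (Sum.inr (Sum.inr i)) (Sum.inr (Sum.inl i')) = 0) :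
    staticResponse (Sum.elim xB (Sum.elim xI₁ xI₂)) k =
      staticResponse (Sum.elim xB xI₁) k₁ + staticResponse (Sum.elim xB xI₂) k₂ := by
  set φ₁ : B ⊕ I₁ → B ⊕ (I₁ ⊕ I₂) := Sum.map id .inl
  set φ₂ : B ⊕ I₂ → B ⊕ (I₁ ⊕ I₂) := Sum.map id .inr
  have hk : k = extendByZero φ₁ k₁ + extendByZero φ₂ k₂ := by
    have e₁ := extendByZero_apply_apply k₁ (f := φ₁)
      (Sum.map_injective.2 ⟨Function.injective_id, Sum.inl_injective⟩)
    have e₂ := extendByZero_apply_apply k₂ (f := φ₂)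
      (Sum.map_injective.2 ⟨Function.injective_id, Sum.inr_injective⟩)
    -- restate `e₁`, `e₂` at constructors, where `simp` can match them
    simp only [Sum.forall, φ₁, φ₂, Sum.map_inl, Sum.map_inr, id] at e₁ e₂
    funext i j
    rcases i with b | i | i <;> rcases j with b' | j | j <;>
      simp [φ₁, φ₂, e₁, e₂, extendByZero_apply_of_notMem_range_left,
        extendByZero_apply_of_notMem_range_right, hkBB, hkBI₁, hkI₁B, hkBI₂, hkI₂B, hkI₁I₁,
        hkI₂I₂, hkI₁I₂, hkI₂I₁]
  rw [hk, staticResponse_extendByZero_add _ hnet₁.2.1 hnet₂.2.1]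
  congr 2 <;> ext (b | i) <;> rfl

/-- superposition principle: the static response of the union of
two networks sharing the same terminals (and with disjoint interior nodes) is
the sum of the two static responses. -/
theorem superposition_principle {d : ℕ} (hd : d = 2 ∨ d = 3)
    {B I₁ I₂ : Type*} [Fintype B] [Fintype I₁] [Fintype I₂]
    [DecidableEq B] [DecidableEq I₁] [DecidableEq I₂]
    (xB : B → Fin d → ℝ) (xI₁ : I₁ → Fin d → ℝ) (xI₂ : I₂ → Fin d → ℝ)
    (k₁ : (B ⊕ I₁) → (B ⊕ I₁) → ℝ) (k₂ : (B ⊕ I₂) → (B ⊕ I₂) → ℝ)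
    (hnet₁ : IsSpringNetwork (Sum.elim xB xI₁) k₁)
    (hnet₂ : IsSpringNetwork (Sum.elim xB xI₂) k₂)
    (hdistinct : Function.Injective (Sum.elim xB (Sum.elim xI₁ xI₂)))
    (k : (B ⊕ (I₁ ⊕ I₂)) → (B ⊕ (I₁ ⊕ I₂)) → ℝ)
    (hkBB : ∀ b b', k (Sum.inl b) (Sum.inl b') =
      k₁ (Sum.inl b) (Sum.inl b') + k₂ (Sum.inl b) (Sum.inl b'))
    (hkBI₁ : ∀ b i, k (Sum.inl b) (Sum.inr (Sum.inl i)) = k₁ (Sum.inl b) (Sum.inr i))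
    (hkI₁B : ∀ i b, k (Sum.inr (Sum.inl i)) (Sum.inl b) = k₁ (Sum.inr i) (Sum.inl b))
    (hkBI₂ : ∀ b i, k (Sum.inl b) (Sum.inr (Sum.inr i)) = k₂ (Sum.inl b) (Sum.inr i))
    (hkI₂B : ∀ i b, k (Sum.inr (Sum.inr i)) (Sum.inl b) = k₂ (Sum.inr i) (Sum.inl b))
    (hkI₁I₁ : ∀ i i', k (Sum.inr (Sum.inl i)) (Sum.inr (Sum.inl i')) =
      k₁ (Sum.inr i) (Sum.inr i'))
    (hkI₂I₂ : ∀ i i', k (Sum.inr (Sum.inr i)) (Sum.inr (Sum.inr i')) =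
      k₂ (Sum.inr i) (Sum.inr i'))
    (hkI₁I₂ : ∀ i i', k (Sum.inr (Sum.inl i)) (Sum.inr (Sum.inr i')) = 0)
    (hkI₂I₁ : ∀ i i', k (Sum.inr (Sum.inr i)) (Sum.inr (Sum.inl i')) = 0) :
    staticResponse (Sum.elim xB (Sum.elim xI₁ xI₂)) k =
      staticResponse (Sum.elim xB xI₁) k₁ + staticResponse (Sum.elim xB xI₂) k₂ :=
  superposition_principle_general xB xI₁ xI₂ k₁ k₂ hnet₁ hnet₂ k hkBB hkBI₁ hkI₁B hkBI₂ hkI₂B hkI₁I₁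
    hkI₂I₂ hkI₁I₂ hkI₂I₁
end
end
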